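/- arXiv:2405.02420 — 6 statements merged into one kernel-verified Lean document; each statement's English description precedes it below -/
import Mathlib

section
/- Let L be a first-order language and M an L-structure whose ground-term realization map is surjective: every m : M equals Term.realize (fun x : Empty => x.elim) t for some ground term t : L.Term Empty. Let I be an index type and, for each i : I, let β i be a type and u_i : L.Term (β i) a term such that (a) u_i is not a variable (it is of the form Term.func f ts for some function symbol f and argument terms ts), (b) every variable b : β i occurs in u_i, and (c) the instances of the u_i cover all ground terms: for every ground term t : L.Term Empty there exist i : I and a ground substitution τ : β i → L.Term Empty with t = (u_i).subst τ. Let P : M → Prop. If for every i : I and every ground substitution τ : β i → L.Term Empty, the implication holds that P is true of the value Term.realize (fun x => x.elim) (τ b) for every b : β i implies P is true of the value Term.realize (fun x => x.elim) ((u_i).subst τ), then P holds of every element of M. -/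
open FirstOrder FirstOrder.Language

private def termSz {L : FirstOrder.Language} {α : Type*} : L.Term α → ℕ
  | .var _ => 0
  | .func _ ts => (Finset.univ.sup fun i => termSz (ts i)) + 1

private theorem termSz_subst_le {L : FirstOrder.Language} {α β : Type*}
    [DecidableEq α] (t : L.Term α) (τ : α → L.Term β) {b : α}
    (hb : b ∈ t.varFinset) : termSz (τ b) ≤ termSz (t.subst τ) := by
  induction t with
  | var a =>
    simp only [Term.varFinset, Finset.mem_singleton] at hb
    subst hb; simp [Term.subst]
  | func f ts ih =>
    simp only [Term.varFinset, Finset.mem_biUnion, Finset.mem_univ, true_and] at hb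
    obtain ⟨j, hj⟩ := hb
    refine (ih j hj).trans ?_
    simp only [Term.subst, termSz]
    exact le_trans (Finset.le_sup (f := fun i => termSz ((ts i).subst τ)) (Finset.mem_univ j)) (Nat.le_add_right _ 1)

private theorem termSz_subst_lt {L : FirstOrder.Language} {α β : Type*}
    [DecidableEq α] {n : ℕ} (f : L.Functions n) (ts : Fin n → L.Term α)
    (τ : α → L.Term β) {b : α}
    (hb : b ∈ (Term.func f ts).varFinset) :
    termSz (τ b) < termSz ((Term.func f ts).subst τ) := by
  simp only [Term.varFinset, Finset.mem_biUnion, Finset.mem_univ, true_and] at hb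
  obtain ⟨j, hj⟩ := hb
  have := termSz_subst_le (ts j) τ hj
  simp only [Term.subst, termSz]
  exact Nat.lt_add_one_of_le (this.trans (Finset.le_sup (f := fun i => termSz ((ts i).subst τ)) (Finset.mem_univ j)))

theorem generator_set_induction
    {L : FirstOrder.Language} {M : Type*} [L.Structure M]
    (hsurj : ∀ m : M, ∃ t : L.Term Empty,
      Term.realize (fun x : Empty => x.elim) t = m)
    {I : Type*} {β : I → Type*} [∀ i, DecidableEq (β i)]
    (u : ∀ i, L.Term (β i))
    (hfunc : ∀ i, ∃ (n : ℕ) (f : L.Functions n) (ts : Fin n → L.Term (β i)),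
      u i = Term.func f ts)
    (hvars : ∀ i (b : β i), b ∈ (u i).varFinset)
    (hcover : ∀ t : L.Term Empty, ∃ (i : I) (τ : β i → L.Term Empty),
      t = (u i).subst τ)
    (P : M → Prop)
    (hind : ∀ (i : I) (τ : β i → L.Term Empty),
      (∀ b : β i, P (Term.realize (fun x : Empty => x.elim) (τ b))) →
      P (Term.realize (fun x : Empty => x.elim) ((u i).subst τ))) :
    ∀ m : M, P m := by
  have key : ∀ (n : ℕ) (t : L.Term Empty), termSz t ≤ n →
      P (Term.realize (fun x : Empty => x.elim) t) := by
    intro n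
    induction n using Nat.strong_induction_on with
    | _ n IH =>
      intro t ht
      obtain ⟨i, τ, rfl⟩ := hcover t
      apply hind
      intro b
      obtain ⟨m', f, ts, hu⟩ := hfunc i
      have hlt : termSz (τ b) < termSz ((u i).subst τ) := by
        rw [hu]; exact termSz_subst_lt f ts τ (hu ▸ hvars i b)
      exact IH (termSz (τ b)) (lt_of_lt_of_le hlt ht) (τ b) le_rfl
  intro m
  obtain ⟨t, rfl⟩ := hsurj m
  exact key (termSz t) t le_rfl
end

section
/- Let L be a first-order language, M an L-structure, α a type, s : L.Term α a term, and φ : L.Formula (α ⊕ Unit) a formula with one distinguished 'hole' variable. Let K be an index type and, for each k : K, let β k be a type, σ_k : α → L.Term (β k) a substitution, r_k : L.Term (β k) a term, and c_k : L.Formula (β k) a formula. Assume the covering (narrowing-lifting) property: for every valuation v : α → M there exist k : K and w : β k → M such that v a = Term.realize w (σ_k a) for all a : α, Formula.Realize c_k w holds, and Term.realize w (s.subst σ_k) = Term.realize w r_k. If for every k : K and every valuation w : β k → M, Formula.Realize c_k w implies Formula.Realize (φ.subst (Sum.elim σ_k (fun _ => r_k))) w, then for every valuation v : α → M, Formula.Realize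 (φ.subst (Sum.elim Term.var (fun _ => s))) v holds. -/
open FirstOrder FirstOrder.Language

theorem narrowing_simplification_sound
    {L : FirstOrder.Language} {M : Type*} [L.Structure M] {α : Type*}
    (s : L.Term α) (φ : L.Formula (α ⊕ Unit))
    {K : Type*} {β : K → Type*}
    (σ : ∀ k, α → L.Term (β k)) (r : ∀ k, L.Term (β k)) (c : ∀ k, L.Formula (β k))
    (hcover : ∀ v : α → M, ∃ (k : K) (w : β k → M),
      (∀ a : α, v a = Term.realize w (σ k a)) ∧
      Formula.Realize (c k) w ∧
      Term.realize w (s.subst (σ k)) = Term.realize w (r k))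
    (hsub : ∀ (k : K) (w : β k → M), Formula.Realize (c k) w →
      Formula.Realize (φ.subst (Sum.elim (σ k) (fun _ => r k))) w) :
    ∀ v : α → M, Formula.Realize (φ.subst (Sum.elim Term.var (fun _ => s))) v := by
  intro v
  obtain ⟨k, w, hv, hc, hr⟩ := hcover v
  have h := hsub k w hc
  rw [Formula.Realize, BoundedFormula.realize_subst] at h ⊢
  convert h using 2
  rename_i x
  cases x with
  | inl a => simpa using hv a
  | inr u =>
    simp only [Sum.elim_inr, show v = fun a => Term.realize w (σ k a) from funext hv,
      ← Term.realize_subst]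
    exact hr
end

section
/- Let L be a first-order language, M an L-structure, α a type with decidable equality, a : α a distinguished variable, and t : L.Term α a term in which the variable a does not occur. Let σ : α → L.Term α be the substitution with σ a = t and σ x = Term.var x for x ≠ a. Then for all formulas γ, λ : L.Formula α the following are equivalent: (i) for every valuation v : α → M, if v a = Term.realize v t and Formula.Realize γ v then Formula.Realize λ v; (ii) for every valuation v : α → M, Formula.Realize (γ.subst σ) v implies Formula.Realize (λ.subst σ) v. -/
open FirstOrder FirstOrder.Language

lemma term_realize_congr_aux {L : FirstOrder.Language} {M : Type*} [L.Structure M]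
    {α : Type*} [DecidableEq α] (t : L.Term α) {v w : α → M}
    (h : ∀ x ∈ t.varFinset, v x = w x) :
    Term.realize v t = Term.realize w t := by
  induction t with
  | var x => exact h x (by simp [Term.varFinset])
  | func f ts ih =>
    simp only [Term.realize]
    congr 1
    funext i
    exact ih i fun x hx => h x (by
      simp only [Term.varFinset, Finset.mem_biUnion]
      exact ⟨i, Finset.mem_univ i, hx⟩)

theorem substitution_left_sound
    {L : FirstOrder.Language} {M : Type*} [L.Structure M]
    {α : Type*} [DecidableEq α]
    (a : α) (t : L.Term α) (ha : a ∉ t.varFinset)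
    (γ lam : L.Formula α) :
    (∀ v : α → M, v a = Term.realize v t →
      Formula.Realize γ v → Formula.Realize lam v) ↔
    (∀ v : α → M,
      Formula.Realize (γ.subst (fun x => if x = a then t else Term.var x)) v →
      Formula.Realize (lam.subst (fun x => if x = a then t else Term.var x)) v) := by
  constructor
  · intro H v
    simp only [Formula.Realize, BoundedFormula.realize_subst]
    set w : α → M := fun x => Term.realize v (if x = a then t else Term.var x) with hw
    apply H w
    have hwa : w a = Term.realize v t := by simp [hw]
    rw [hwa]
    exact term_realize_congr_aux t fun x hx => by
      have hx' : x ≠ a := fun h => ha (h ▸ hx)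
      simp [hw, hx']
  · intro H v hva hγ
    have key : (fun x => Term.realize v (if x = a then t else Term.var x)) = v := by
      funext x
      by_cases hx : x = a
      · subst hx; simp [hva]
      · simp [hx]
    have := H v (by rw [Formula.Realize, BoundedFormula.realize_subst, key]; exact hγ)
    rwa [Formula.Realize, BoundedFormula.realize_subst, key] at this
end

section
/- Let L be a first-order language, M an L-structure, α a type with decidable equality, a : α a distinguished variable, and t : L.Term α a term in which the variable a does not occur. Let σ : α → L.Term α be the substitution with σ a = t and σ x = Term.var x for x ≠ a. Let γ, λ : L.Formula α. If (i) for every valuation v : α → M, Formula.Realize γ v implies v a = Term.realize v t, and (ii) for every valuation v : α → M, Formula.Realize (γ.subst σ) v implies Formula.Realize (λ.subst σ) v, then for every valuation v : α → M, Formula.Realize γ v implies both Formula.Realize λ v and v a = Term.realize v t. -/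
open FirstOrder FirstOrder.Language

theorem substitution_right_sound
    {L : FirstOrder.Language} {M : Type*} [L.Structure M]
    {α : Type*} [DecidableEq α]
    (a : α) (t : L.Term α) (ha : a ∉ t.varFinset)
    (γ lam : L.Formula α)
    (h1 : ∀ v : α → M, Formula.Realize γ v → v a = Term.realize v t)
    (h2 : ∀ v : α → M,
      Formula.Realize (γ.subst (fun x => if x = a then t else Term.var x)) v →
      Formula.Realize (lam.subst (fun x => if x = a then t else Term.var x)) v) :
    ∀ v : α → M, Formula.Realize γ v →
      Formula.Realize lam v ∧ v a = Term.realize v t := by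
  intro v hv
  have hva := h1 v hv
  have hfun : (fun x => Term.realize v (if x = a then t else Term.var x)) = v := by
    funext x
    by_cases hx : x = a <;> simp [hx, hva.symm]
  refine ⟨?_, hva⟩
  have hγ : Formula.Realize (γ.subst (fun x => if x = a then t else Term.var x)) v := by
    rw [Formula.Realize, BoundedFormula.realize_subst, hfun]; exact hv
  have := h2 v hγ
  rwa [Formula.Realize, BoundedFormula.realize_subst, hfun] at this
end

section
/- Let L be a first-order language, M an L-structure, and α, β types. Let γ, δ : L.Formula β and assume the clause γ ⟹ δ is valid in M, i.e. for every valuation u : β → M, Formula.Realize γ u implies Formula.Realize δ u. Let θ : β → L.Term α be a substitution. Then for all formulas e, d, c : L.Formula α, the implication ((γ.subst θ) ⊓ e) ⟹ (((δ.subst θ) ⊔ d) ⊓ c) is valid in M if and only if the implication ((γ.subst θ) ⊓ e) ⟹ c is valid in M. -/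
open FirstOrder FirstOrder.Language

theorem clause_subsumption_sound
    {L : FirstOrder.Language} {M : Type*} [L.Structure M] {α β : Type*}
    (γ δ : L.Formula β)
    (hvalid : ∀ u : β → M, Formula.Realize γ u → Formula.Realize δ u)
    (θ : β → L.Term α) (e d c : L.Formula α) :
    (∀ v : α → M, Formula.Realize ((γ.subst θ ⊓ e) ⟹ ((δ.subst θ ⊔ d) ⊓ c)) v) ↔
    (∀ v : α → M, Formula.Realize ((γ.subst θ ⊓ e) ⟹ c) v) := by
  simp only [Formula.Realize, BoundedFormula.realize_imp, BoundedFormula.realize_inf,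
    BoundedFormula.realize_sup, BoundedFormula.realize_subst]
  constructor
  · exact fun h v hv => (h v hv).2
  · exact fun h v hv => ⟨Or.inl (hvalid _ hv.1), h v hv⟩
end

section
/- Let L be a first-order language, M an L-structure, α a type, I an index type, and for each i : I a type β i and a term u_i : L.Term (β i), such that the instances of the u_i cover M: for every m : M there exist i : I and a valuation w : β i → M with m = Term.realize w (u_i). Let φ : L.Formula (α ⊕ Unit), and for each i : I define φ_i : L.Formula (α ⊕ β i) as φ.subst (Sum.elim (fun a => Term.var (Sum.inl a)) (fun _ => (u_i).relabel Sum.inr)). Then the following are equivalent: (i) for every valuation v : α → M and every element m : M, Formula.Realize φ (Sum.elim v (fun _ => m)) holds; (ii) for every i : I, φ_i is valid in M (i.e. Formula.Realize φ_i z holds for every valuation z : (α ⊕ β i) → M). -/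
open FirstOrder FirstOrder.Language

theorem case_rule_sound
    {L : FirstOrder.Language} {M : Type*} [L.Structure M] {α : Type*}
    {I : Type*} {β : I → Type*}
    (u : ∀ i, L.Term (β i))
    (hcover : ∀ m : M, ∃ (i : I) (w : β i → M), m = Term.realize w (u i))
    (φ : L.Formula (α ⊕ Unit)) :
    (∀ (v : α → M) (m : M), Formula.Realize φ (Sum.elim v (fun _ => m))) ↔
    (∀ (i : I) (z : α ⊕ β i → M),
      Formula.Realize
        (φ.subst (Sum.elim (fun a => Term.var (Sum.inl a))
          (fun _ => (u i).relabel Sum.inr))) z) := by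
  have key : ∀ (i : I) (z : α ⊕ β i → M),
      (fun a => Term.realize z
        ((Sum.elim (fun a => Term.var (Sum.inl a)) (fun _ => (u i).relabel Sum.inr)) a))
      = Sum.elim (fun a => z (Sum.inl a))
          (fun _ : Unit => Term.realize (fun b => z (Sum.inr b)) (u i)) := by
    intro i z
    funext x
    cases x with
    | inl a => simp
    | inr b => simp [Term.realize_relabel]; rfl
  constructor
  · intro h i z
    simp only [Formula.Realize, BoundedFormula.realize_subst]
    rw [key i z]
    exact h _ _
  · intro h v m
    obtain ⟨i, w, rfl⟩ := hcover m
    have := h i (Sum.elim v w)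
    simp only [Formula.Realize, BoundedFormula.realize_subst] at this
    rw [key i (Sum.elim v w)] at this
    exact this
end
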